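/- Let μ be a compactly supported Borel probability measure on ℝ^d × ℝ^d with velocity barycenter v̄ = (v̄_1,…,v̄_d). Let k ∈ {1,…,d}, x̃ ∈ ℝ^d, a_k ∈ ℝ and X, W_k ≥ 0, and suppose supp(μ) ⊆ B(x̃, X) × {w ∈ ℝ^d : a_k ≤ w_k ≤ a_k + W_k}. Set r⁺ = (φ(0)/(φ(0) + φ(2X)))·(W_k + a_k − v̄_k). Then for every (x, v) ∈ ℝ^d × ℝ^d with ‖x − x̃‖ ≤ X and v_k − v̄_k > r⁺, one has ⟨ξ[μ](x, v), e_k⟩·(v_k − v̄_k) < 0, where e_k is the k-th standard basis vector of ℝ^d. -/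

import Mathlib

open MeasureTheory Metric Set

/-- The (topological) support of a measure. -/
def msupp {α : Type*} [TopologicalSpace α] [MeasurableSpace α]
    (μ : Measure α) : Set α :=
  {x | ∀ U : Set α, IsOpen U → x ∈ U → 0 < μ U}

/-- The Cucker–Smale interaction kernel. -/
noncomputable def xi {d : ℕ} (φ : ℝ → ℝ)
    (μ : Measure (EuclideanSpace ℝ (Fin d) × EuclideanSpace ℝ (Fin d)))
    (x v : EuclideanSpace ℝ (Fin d)) : EuclideanSpace ℝ (Fin d) :=
  ∫ p, φ (‖x - p.1‖) • (p.2 - v) ∂μ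

/-!
Write `u = w_k - v_k` and `ψ = φ ‖x - y‖`. On the support of `μ` we have
`φ (2X) ≤ ψ ≤ φ 0` and `u ≤ a_k + W_k - v_k`, so pointwise
`ψ u ≤ φ(2X) u + (φ 0 - φ(2X)) · max (a_k + W_k - v_k) 0`.
Integrating, and using `∫ u dμ = v̄_k - v_k`, gives
`ξ_k ≤ -φ(2X) (v_k - v̄_k) + (φ 0 - φ(2X)) · max (a_k + W_k - v_k) 0`,
which is negative as soon as `v_k - v̄_k > r⁺`, because
`φ 0 / (φ 0 + φ(2X)) ≥ (φ 0 - φ(2X)) / φ 0` and `r⁺ ≥ 0`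
(the barycenter satisfies `v̄_k ≤ a_k + W_k`).
-/

section Support

variable {α : Type*} [TopologicalSpace α] [MeasurableSpace α]

theorem msupp_eq_support (μ : Measure α) : msupp μ = μ.support := by
  rw [Measure.support_eq_forall_isOpen]
  ext x
  exact forall_congr' fun U => forall_comm

theorem ae_mem_msupp [HereditarilyLindelofSpace α] (μ : Measure α) : ∀ᵐ p ∂μ, p ∈ msupp μ :=
  msupp_eq_support μ ▸ Measure.support_mem_ae

theorem Continuous.integrable_of_isCompact_msupp [HereditarilyLindelofSpace α] [T2Space α]
    [OpensMeasurableSpace α] {E : Type*} [NormedAddCommGroup E] {μ : Measure α}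
    [IsFiniteMeasure μ] (hμ : IsCompact (msupp μ)) {f : α → E} (hf : Continuous f) :
    Integrable f μ := by
  rw [← Measure.restrict_eq_self_of_ae_mem (ae_mem_msupp μ)]
  exact hf.continuousOn.integrableOn_compact hμ

end Support

theorem mul_le_mul_add_mul_max_of_mem_Icc {m M ψ u c : ℝ} (hψ : ψ ∈ Icc m M) (hu : u ≤ c) :
    ψ * u ≤ m * u + (M - m) * max c 0 := by
  have hu' : u ≤ max c 0 := hu.trans (le_max_left c 0)
  have hc : 0 ≤ max c 0 := le_max_right c 0
  nlinarith [hψ.1, hψ.2]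

theorem integral_mul_le_of_ae_mem_Icc {α : Type*} [MeasurableSpace α] {μ : Measure α}
    [IsProbabilityMeasure μ] {ψ u : α → ℝ} {m M c : ℝ} (hψu : Integrable (fun a => ψ a * u a) μ)
    (hu : Integrable u μ) (hψ : ∀ᵐ a ∂μ, ψ a ∈ Icc m M) (huc : ∀ᵐ a ∂μ, u a ≤ c) :
    ∫ a, ψ a * u a ∂μ ≤ m * ∫ a, u a ∂μ + (M - m) * max c 0 := by
  calc ∫ a, ψ a * u a ∂μ ≤ ∫ a, (m * u a + (M - m) * max c 0) ∂μ :=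
        integral_mono_ae hψu ((hu.const_mul m).add (integrable_const _)) <| by
          filter_upwards [hψ, huc] with a using mul_le_mul_add_mul_max_of_mem_Icc
    _ = m * ∫ a, u a ∂μ + (M - m) * max c 0 := by
        rw [integral_add (hu.const_mul m) (integrable_const _), integral_const_mul]
        simp

theorem norm_sub_le_two_mul_of_mem_closedBall {E : Type*} [SeminormedAddCommGroup E]
    {x y z : E} {r : ℝ} (hx : ‖x - z‖ ≤ r) (hy : y ∈ closedBall z r) : ‖x - y‖ ≤ 2 * r := by
  rw [mem_closedBall_iff_norm] at hy
  linarith [norm_sub_le_norm_sub_add_norm_sub x z y, norm_sub_rev z y]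

theorem neg_mul_add_mul_max_neg {φ₀ φ₁ M δ : ℝ} (hφ₁ : 0 < φ₁) (hφ : φ₁ ≤ φ₀) (hM : 0 ≤ M)
    (hδ : φ₀ / (φ₀ + φ₁) * M < δ) : φ₁ * -δ + (φ₀ - φ₁) * max (M - δ) 0 < 0 := by
  have hsum : 0 < φ₀ + φ₁ := by linarith
  rw [div_mul_eq_mul_div, div_lt_iff₀ hsum] at hδ
  have hδpos : 0 < δ := by nlinarith [mul_nonneg (hφ₁.le.trans hφ) hM]
  rcases le_total (M - δ) 0 with hMδ | hMδ
  · rw [max_eq_right hMδ]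
    nlinarith
  · rw [max_eq_left hMδ]
    nlinarith [mul_nonneg (mul_nonneg hφ₁.le hφ₁.le) hM]

section Kernel

variable {d : ℕ} {μ : Measure (EuclideanSpace ℝ (Fin d) × EuclideanSpace ℝ (Fin d))}

theorem integral_snd_apply [IsFiniteMeasure μ] (hμ : IsCompact (msupp μ)) (k : Fin d) :
    (∫ p, p.2 ∂μ) k = ∫ p, p.2 k ∂μ :=
  eval_integral_piLp (continuous_snd.integrable_of_isCompact_msupp hμ).eval_piLp k

theorem integral_snd_apply_le [IsProbabilityMeasure μ] (hμ : IsCompact (msupp μ)) {k : Fin d}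
    {b : ℝ} (hb : ∀ᵐ p ∂μ, p.2 k ≤ b) : (∫ p, p.2 ∂μ) k ≤ b := by
  rw [integral_snd_apply hμ]
  simpa using integral_mono_ae (Continuous.integrable_of_isCompact_msupp hμ (by fun_prop))
    (integrable_const b) hb

theorem xi_apply [IsFiniteMeasure μ] {φ : ℝ → ℝ} (hφ : Continuous φ) (hμ : IsCompact (msupp μ))
    (x v : EuclideanSpace ℝ (Fin d)) (k : Fin d) :
    xi φ μ x v k = ∫ p, φ ‖x - p.1‖ * (p.2 k - v k) ∂μ := by
  have hint : Integrable (fun p : EuclideanSpace ℝ (Fin d) × EuclideanSpace ℝ (Fin d) =>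
      φ ‖x - p.1‖ • (p.2 - v)) μ :=
    Continuous.integrable_of_isCompact_msupp hμ (by fun_prop)
  simp [xi, eval_integral_piLp hint.eval_piLp k]

theorem xi_apply_le [IsProbabilityMeasure μ] {φ : ℝ → ℝ} (hφ : Continuous φ)
    (hμ : IsCompact (msupp μ)) {x v : EuclideanSpace ℝ (Fin d)} {k : Fin d} {m M b : ℝ}
    (hφmem : ∀ᵐ p ∂μ, φ ‖x - p.1‖ ∈ Icc m M) (hb : ∀ᵐ p ∂μ, p.2 k ≤ b) :
    xi φ μ x v k ≤ m * ((∫ p, p.2 ∂μ) k - v k) + (M - m) * max (b - v k) 0 := by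
  have hg : Integrable (fun p : EuclideanSpace ℝ (Fin d) × EuclideanSpace ℝ (Fin d) =>
      p.2 k) μ :=
    Continuous.integrable_of_isCompact_msupp hμ (by fun_prop)
  have hu_int : ∫ p, (p.2 k - v k) ∂μ = (∫ p, p.2 ∂μ) k - v k := by
    rw [integral_sub hg (integrable_const _), integral_snd_apply hμ]
    simp
  rw [xi_apply hφ hμ, ← hu_int]
  exact integral_mul_le_of_ae_mem_Icc
    (Continuous.integrable_of_isCompact_msupp hμ (by fun_prop)) (hg.sub (integrable_const _))
    hφmem (hb.mono fun p hp => by linarith)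

end Kernel

theorem stmt1_general {d : ℕ} (φ : ℝ → ℝ) (hφc : Continuous φ)
    (hφa : Antitone φ) (hφp : ∀ r : ℝ, 0 < φ r)
    (μ : Measure (EuclideanSpace ℝ (Fin d) × EuclideanSpace ℝ (Fin d)))
    [IsProbabilityMeasure μ] (hcs : IsCompact (msupp μ))
    (k : Fin d) (xt : EuclideanSpace ℝ (Fin d)) (ak X Wk : ℝ)
    (hX : 0 ≤ X)
    (hsupp : msupp μ ⊆
      (closedBall xt X) ×ˢ {w : EuclideanSpace ℝ (Fin d) | ak ≤ w k ∧ w k ≤ ak + Wk})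
    (vbar : EuclideanSpace ℝ (Fin d)) (hvbar : vbar = ∫ p, p.2 ∂μ)
    (rp : ℝ) (hrp : rp = φ 0 / (φ 0 + φ (2 * X)) * (Wk + ak - vbar k))
    (x v : EuclideanSpace ℝ (Fin d)) (hx : ‖x - xt‖ ≤ X) (hv : rp < v k - vbar k) :
    xi φ μ x v k * (v k - vbar k) < 0 := by
  have hsupp_ae := (ae_mem_msupp μ).mono fun p hp => hsupp hp
  have hvel_le : ∀ᵐ p ∂μ, p.2 k ≤ ak + Wk := hsupp_ae.mono fun p hp => hp.2.2
  have hφmem : ∀ᵐ p ∂μ, φ ‖x - p.1‖ ∈ Icc (φ (2 * X)) (φ 0) := hsupp_ae.mono fun p hp =>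
    ⟨hφa (norm_sub_le_two_mul_of_mem_closedBall hx hp.1), hφa (norm_nonneg _)⟩
  have hvbar_le : vbar k ≤ ak + Wk := hvbar ▸ integral_snd_apply_le hcs hvel_le
  have hrp_nonneg : 0 ≤ rp := hrp ▸ mul_nonneg
    (div_nonneg (hφp 0).le (by linarith [hφp 0, hφp (2 * X)])) (by linarith)
  have hxi_neg : xi φ μ x v k < 0 := by
    have hxi := xi_apply_le (v := v) hφc hcs hφmem hvel_le
    rw [← hvbar, show ak + Wk - v k = Wk + ak - vbar k - (v k - vbar k) by ring,
      show vbar k - v k = -(v k - vbar k) by ring] at hxi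
    exact hxi.trans_lt <| neg_mul_add_mul_max_neg (hφp _) (hφa (by positivity))
      (by linarith) (hrp ▸ hv)
  exact mul_neg_of_neg_of_pos hxi_neg (hrp_nonneg.trans_lt hv)

theorem stmt1 {d : ℕ} (hd : 0 < d) (φ : ℝ → ℝ) (hφc : Continuous φ)
    (hφa : Antitone φ) (hφp : ∀ r : ℝ, 0 < φ r)
    (μ : Measure (EuclideanSpace ℝ (Fin d) × EuclideanSpace ℝ (Fin d)))
    [IsProbabilityMeasure μ] (hcs : IsCompact (msupp μ))
    (k : Fin d) (xt : EuclideanSpace ℝ (Fin d)) (ak X Wk : ℝ)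
    (hX : 0 ≤ X) (hWk : 0 ≤ Wk)
    (hsupp : msupp μ ⊆
      (closedBall xt X) ×ˢ {w : EuclideanSpace ℝ (Fin d) | ak ≤ w k ∧ w k ≤ ak + Wk})
    (vbar : EuclideanSpace ℝ (Fin d)) (hvbar : vbar = ∫ p, p.2 ∂μ)
    (rp : ℝ) (hrp : rp = φ 0 / (φ 0 + φ (2 * X)) * (Wk + ak - vbar k))
    (x v : EuclideanSpace ℝ (Fin d)) (hx : ‖x - xt‖ ≤ X) (hv : rp < v k - vbar k) :
    xi φ μ x v k * (v k - vbar k) < 0 :=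
  stmt1_general φ hφc hφa hφp μ hcs k xt ak X Wk hX hsupp vbar hvbar rp hrp x v hx hv
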